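/- arXiv:1703.06053 — 4 statements merged into one kernel-verified Lean document; each statement's English description precedes it below -/
import Mathlib

section
/- Let F : [0,1]^E → ℝ be the multilinear extension of a submodular function f : Finset E → ℝ≥0, i.e. F(y) = Σ_{S ⊆ E} f(S) · Π_{i ∈ S} y_i · Π_{j ∉ S} (1 − y_j). If y ∈ [0,1]^E satisfies y_i ≤ a for all i, then for every S ⊆ E, F(y ∨ 1_S) ≥ (1 − a) · f(S), where (y ∨ 1_S)_i = max(y_i, 1_S(i)). -/
/-- The multilinear extension of a set function. -/
noncomputable def multilinearExt {E : Type*} [Fintype E] [DecidableEq E]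
    (f : Finset E → ℝ) (y : E → ℝ) : ℝ :=
  ∑ S ∈ Finset.univ.powerset, f S * (∏ i ∈ S, y i) * ∏ j ∈ Sᶜ, (1 - y j)

/-- Prefix-marginals lemma (FMV / Lovász-extension greedy vertex), with the order chosen
by decreasing `y` so that the Abel-summation bound holds. -/
lemma exists_prefix_marginals {E : Type*} [DecidableEq E] (f : Finset E → ℝ)
    (hsub : ∀ A B : Finset E, f A + f B ≥ f (A ∪ B) + f (A ∩ B))
    (hnonneg : ∀ S : Finset E, 0 ≤ f S) (y : E → ℝ) (hy0 : ∀ i, 0 ≤ y i) :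
    ∀ n : ℕ, ∀ U B : Finset E, U.card = n → ∃ d : E → ℝ,
      (∀ R ⊆ U, f (B ∪ R) ≥ f B + ∑ i ∈ R, d i) ∧
      (∀ c : ℝ, 0 ≤ c → (∀ i ∈ U, y i ≤ c) → ∑ i ∈ U, y i * d i ≥ -(c * f B)) := by
  intro n
  induction n with
  | zero =>
      intro U B hU
      rw [Finset.card_eq_zero] at hU
      subst hU
      refine ⟨0, fun R hR => by simp [Finset.subset_empty.mp hR], fun c hc _ => ?_⟩
      simp only [Finset.sum_empty]
      nlinarith [mul_nonneg hc (hnonneg B)]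
  | succ n ih =>
      intro U B hUcard
      have hne : U.Nonempty := Finset.card_pos.mp (by omega)
      obtain ⟨j, hjU, hjmax⟩ := Finset.exists_max_image U y hne
      set U' := U.erase j with hU'def
      have hj : j ∉ U' := Finset.notMem_erase j U
      have hUeq : U = insert j U' := (Finset.insert_erase hjU).symm
      have hcard : U'.card = n := by
        rw [hU'def, Finset.card_erase_of_mem hjU, hUcard]
        omega
      obtain ⟨d', hd', hdsum'⟩ := ih U' (insert j B) hcard
      refine ⟨Function.update d' j (f (insert j B) - f B), ?_, ?_⟩
      · intro R hR0
        have hR : R ⊆ insert j U' := hUeq ▸ hR0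
        by_cases hjR : j ∈ R
        · have hR' : R.erase j ⊆ U' := by
            intro x hx
            have hx1 := Finset.mem_erase.mp hx
            have := hR hx1.2
            rcases Finset.mem_insert.mp this with h | h
            · exact absurd h hx1.1
            · exact h
          have key := hd' (R.erase j) hR'
          have hBR : B ∪ R = insert j B ∪ R.erase j := by
            ext x
            simp only [Finset.mem_union, Finset.mem_insert, Finset.mem_erase]
            by_cases hx : x = j
            · subst hx; simp [hjR] <;> tauto
            · simp [hx] <;> tauto
          have hsum : ∑ i ∈ R, Function.update d' j (f (insert j B) - f B) i
              = (f (insert j B) - f B) + ∑ i ∈ R.erase j, d' i := by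
            rw [← Finset.add_sum_erase _ _ hjR]
            congr 1
            · simp [Function.update]
            · refine Finset.sum_congr rfl fun x hx => ?_
              have : x ≠ j := (Finset.mem_erase.mp hx).1
              simp [Function.update, this]
          rw [hBR, hsum]
          linarith [key]
        · have hR' : R ⊆ U' := by
            intro x hx
            rcases Finset.mem_insert.mp (hR hx) with h | h
            · exact absurd (h ▸ hx) hjR
            · exact h
          have key := hd' R hR'
          have hsubm := hsub (insert j B) (B ∪ R)
          have hU : insert j B ∪ (B ∪ R) = insert j B ∪ R := by
            ext x; simp only [Finset.mem_union, Finset.mem_insert]; tauto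
          have hI : insert j B ∩ (B ∪ R) = B := by
            ext x
            simp only [Finset.mem_inter, Finset.mem_union, Finset.mem_insert]
            by_cases hx : x = j
            · subst hx; simp [hjR] <;> tauto
            · simp [hx] <;> tauto
          rw [hU, hI] at hsubm
          have hsum : ∑ i ∈ R, Function.update d' j (f (insert j B) - f B) i
              = ∑ i ∈ R, d' i := by
            refine Finset.sum_congr rfl fun x hx => ?_
            have : x ≠ j := fun h => hjR (h ▸ hx)
            simp [Function.update, this]
          rw [hsum]
          linarith [key]
      · intro c hc hcy
        rw [hUeq, Finset.sum_insert hj]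
        have h1 : Function.update d' j (f (insert j B) - f B) j
            = f (insert j B) - f B := by simp [Function.update]
        have h2 : ∑ i ∈ U', y i * Function.update d' j (f (insert j B) - f B) i
            = ∑ i ∈ U', y i * d' i := by
          refine Finset.sum_congr rfl fun x hx => ?_
          have : x ≠ j := fun h => hj (h ▸ hx)
          simp [Function.update, this]
        have h3 := hdsum' (y j) (hy0 j)
          (fun i hi => hjmax i (hUeq ▸ Finset.mem_insert_of_mem hi))
        rw [h1, h2]
        have h4 : y j ≤ c := hcy j hjU
        nlinarith [h3, hnonneg B, hy0 j, hnonneg (insert j B)]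

/-- Expectation lower bound: if `f (B ∪ R) ≥ c + ∑_{i∈R} d i` for all `R ⊆ U`, then the
expectation of `f (B ∪ R)` over random `R ⊆ U` is at least `c + ∑_{i∈U} y i * d i`. -/
lemma exp_lower {E : Type*} [DecidableEq E] (f : Finset E → ℝ) (y : E → ℝ)
    (hy0 : ∀ i, 0 ≤ y i) (hy1 : ∀ i, y i ≤ 1) :
    ∀ U B : Finset E, ∀ c : ℝ, ∀ d : E → ℝ,
      (∀ R ⊆ U, f (B ∪ R) ≥ c + ∑ i ∈ R, d i) →
      ∑ R ∈ U.powerset, f (B ∪ R) * ((∏ i ∈ R, y i) * ∏ j ∈ U \ R, (1 - y j))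
        ≥ c + ∑ i ∈ U, y i * d i := by
  intro U
  induction U using Finset.induction_on with
  | empty =>
      intro B c d h
      have := h ∅ (by simp)
      simpa using this
  | @insert j U' hj ih =>
      intro B c d h
      rw [Finset.sum_powerset_insert hj]
      have e1 : ∀ R ∈ U'.powerset,
          f (B ∪ R) * ((∏ i ∈ R, y i) * ∏ j' ∈ insert j U' \ R, (1 - y j'))
          = (1 - y j) * (f (B ∪ R) * ((∏ i ∈ R, y i) * ∏ j' ∈ U' \ R, (1 - y j'))) := by
        intro R hR
        have hRU : R ⊆ U' := Finset.mem_powerset.mp hR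
        have hjR : j ∉ R := fun h' => hj (hRU h')
        have : insert j U' \ R = insert j (U' \ R) := by
          ext x
          simp only [Finset.mem_sdiff, Finset.mem_insert]
          constructor
          · rintro ⟨h1 | h1, h2⟩
            · exact Or.inl h1
            · exact Or.inr ⟨h1, h2⟩
          · rintro (h1 | ⟨h1, h2⟩)
            · exact ⟨Or.inl h1, h1 ▸ hjR⟩
            · exact ⟨Or.inr h1, h2⟩
        rw [this, Finset.prod_insert (by simp [hj])]
        ring
      have e2 : ∀ R ∈ U'.powerset,
          f (B ∪ insert j R) * ((∏ i ∈ insert j R, y i)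
            * ∏ j' ∈ insert j U' \ insert j R, (1 - y j'))
          = y j * (f (insert j B ∪ R) * ((∏ i ∈ R, y i) * ∏ j' ∈ U' \ R, (1 - y j'))) := by
        intro R hR
        have hRU : R ⊆ U' := Finset.mem_powerset.mp hR
        have hjR : j ∉ R := fun h' => hj (hRU h')
        have h1 : insert j U' \ insert j R = U' \ R := by
          ext x
          simp only [Finset.mem_sdiff, Finset.mem_insert, not_or]
          constructor
          · rintro ⟨h1 | h1, h2, h3⟩
            · exact absurd h1 h2
            · exact ⟨h1, h3⟩
          · rintro ⟨h1, h2⟩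
            exact ⟨Or.inr h1, fun h => hj (h ▸ h1), h2⟩
        have h2 : B ∪ insert j R = insert j B ∪ R := by
          ext x; simp only [Finset.mem_union, Finset.mem_insert]; tauto
        rw [h1, h2, Finset.prod_insert hjR]
        ring
      rw [Finset.sum_congr rfl e1, Finset.sum_congr rfl e2, ← Finset.mul_sum, ← Finset.mul_sum]
      have ihA := ih B c d (fun R hR => h R (hR.trans (Finset.subset_insert j U')))
      have ihB : ∑ R ∈ U'.powerset,
          f (insert j B ∪ R) * ((∏ i ∈ R, y i) * ∏ j' ∈ U' \ R, (1 - y j'))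
          ≥ (c + d j) + ∑ i ∈ U', y i * d i := by
        refine ih (insert j B) (c + d j) d (fun R hR => ?_)
        have hjR : j ∉ R := fun h' => hj (hR h')
        have key := h (insert j R) (by
          intro x hx
          rcases Finset.mem_insert.mp hx with h' | h'
          · exact Finset.mem_insert.mpr (Or.inl h')
          · exact Finset.mem_insert.mpr (Or.inr (hR h')))
        have h2 : B ∪ insert j R = insert j B ∪ R := by
          ext x; simp only [Finset.mem_union, Finset.mem_insert]; tauto
        rw [h2, Finset.sum_insert hjR] at key
        linarith [key]
      have hyj0 := hy0 j
      have hyj1 := hy1 j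
      have hs : ∑ i ∈ insert j U', y i * d i = y j * d j + ∑ i ∈ U', y i * d i :=
        Finset.sum_insert hj
      nlinarith [ihA, ihB]

theorem stmt_6 {E : Type*} [Fintype E] [DecidableEq E] (f : Finset E → ℝ)
    (hsub : ∀ A B : Finset E, f A + f B ≥ f (A ∪ B) + f (A ∩ B))
    (hnonneg : ∀ S : Finset E, 0 ≤ f S)
    (a : ℝ) (ha : a ∈ Set.Icc (0:ℝ) 1)
    (y : E → ℝ) (hy : ∀ i, y i ∈ Set.Icc (0:ℝ) 1) (hya : ∀ i, y i ≤ a) :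
    ∀ S : Finset E,
      multilinearExt f (fun i => max (y i) (if i ∈ S then 1 else 0)) ≥ (1 - a) * f S := by
  intro S
  set z : E → ℝ := fun i => max (y i) (if i ∈ S then 1 else 0) with hz
  have hz1 : ∀ i ∈ S, z i = 1 := by
    intro i hi
    simp only [hz, hi, if_pos]
    exact max_eq_right (hy i).2
  have hz2 : ∀ i, i ∉ S → z i = y i := by
    intro i hi
    simp only [hz, hi, if_neg, not_false_iff]
    exact max_eq_left (hy i).1
  -- Step 1: rewrite the multilinear extension as an expectation over R ⊆ Sᶜ.
  have step1 : multilinearExt f z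
      = ∑ R ∈ Sᶜ.powerset, f (S ∪ R) * ((∏ i ∈ R, y i) * ∏ j ∈ Sᶜ \ R, (1 - y j)) := by
    unfold multilinearExt
    rw [← Finset.sum_filter_of_ne (p := fun T => S ⊆ T)
      (f := fun T => f T * (∏ i ∈ T, z i) * ∏ j ∈ Tᶜ, (1 - z j))]
    · refine Finset.sum_nbij' (fun T => T \ S) (fun R => S ∪ R) ?_ ?_ ?_ ?_ ?_
      · intro T hT
        rw [Finset.mem_powerset]
        have hST := (Finset.mem_filter.mp hT).2
        intro x hx
        exact Finset.mem_compl.mpr (Finset.mem_sdiff.mp hx).2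
      · intro R hR
        simp only [Finset.mem_filter, Finset.mem_powerset]
        exact ⟨Finset.subset_univ _, Finset.subset_union_left⟩
      · intro T hT
        have hST := (Finset.mem_filter.mp hT).2
        exact Finset.union_sdiff_of_subset hST
      · intro R hR
        have hRS : R ⊆ Sᶜ := Finset.mem_powerset.mp hR
        ext x
        simp only [Finset.mem_sdiff, Finset.mem_union]
        constructor
        · rintro ⟨h1 | h1, h2⟩
          · exact absurd h1 h2
          · exact h1
        · intro h1
          exact ⟨Or.inr h1, Finset.mem_compl.mp (hRS h1)⟩
      · intro T hT
        have hST := (Finset.mem_filter.mp hT).2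
        have hT1 : T = S ∪ (T \ S) := (Finset.union_sdiff_of_subset hST).symm
        have hprod1 : ∏ i ∈ T, z i = ∏ i ∈ T \ S, y i := by
          conv_lhs => rw [hT1]
          rw [Finset.prod_union Finset.disjoint_sdiff]
          rw [Finset.prod_congr rfl hz1, Finset.prod_congr rfl
            (fun x hx => hz2 x (Finset.mem_sdiff.mp hx).2)]
          simp
        have hcompl : Tᶜ = Sᶜ \ (T \ S) := by
          ext x
          simp only [Finset.mem_compl, Finset.mem_sdiff]
          constructor
          · intro hx
            exact ⟨fun hS => hx (hST hS), fun h => hx h.1⟩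
          · rintro ⟨h1, h2⟩ hxT
            exact h2 ⟨hxT, h1⟩
        have hprod2 : ∏ j ∈ Tᶜ, (1 - z j) = ∏ j ∈ Sᶜ \ (T \ S), (1 - y j) := by
          rw [hcompl]
          refine Finset.prod_congr rfl fun x hx => ?_
          rw [hz2 x (Finset.mem_compl.mp (Finset.mem_sdiff.mp hx).1)]
        rw [hprod1, hprod2, ← hT1]
        ring
    · intro T _ hne
      by_contra hST
      obtain ⟨j, hjS, hjT⟩ := Finset.not_subset.mp hST
      apply hne
      have : ∏ j' ∈ Tᶜ, (1 - z j') = 0 := by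
        refine Finset.prod_eq_zero (Finset.mem_compl.mpr hjT) ?_
        rw [hz1 j hjS]; ring
      rw [this, mul_zero]
  -- Step 2: get prefix marginals and conclude.
  obtain ⟨d, hd, hdsum⟩ := exists_prefix_marginals f hsub hnonneg y
    (fun i => (hy i).1) Sᶜ.card Sᶜ S rfl
  have main := exp_lower f y (fun i => (hy i).1) (fun i => (hy i).2) Sᶜ S (f S) d hd
  rw [step1]
  have hbound := hdsum a ha.1 (fun i _ => hya i)
  linarith [main, hbound]
end

section
/- Let M = (E, 𝓘) be a matroid with matroid polytope P(M) = conv{1_S : S ∈ 𝓘}. Suppose B(0), …, B(k−1) ∈ 𝓘 and y : E → [0,1] is produced by y(0) = 0 and y_i(t+1) = 1 + e^(−1/k)(y_i(t) − 1) if i ∈ B(t), y_i(t+1) = y_i(t) otherwise. Then y(k) ∈ P(M). -/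
theorem stmt_11 {E : Type*} [Fintype E] [DecidableEq E] (M : Matroid E)
    (k : ℕ) (hk : 0 < k) (B : Fin k → Finset E) (hB : ∀ t, M.Indep ↑(B t))
    (y : ℕ → E → ℝ) (h0 : y 0 = fun _ => 0)
    (hupd : ∀ t : Fin k, ∀ i : E,
      y (t + 1) i = if i ∈ B t then 1 + Real.exp (-(1 / (k : ℝ))) * (y t i - 1)
                    else y t i) :
    y k ∈ convexHull ℝ
      {x : E → ℝ | ∃ S : Finset E, M.Indep ↑S ∧ x = fun i => if i ∈ S then (1:ℝ) else 0} := by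
  set V : Set (E → ℝ) :=
    {x : E → ℝ | ∃ S : Finset E, M.Indep ↑S ∧ x = fun i => if i ∈ S then (1:ℝ) else 0} with hVdef
  have hk' : (0:ℝ) < (k:ℝ) := by exact_mod_cast hk
  set q : ℝ := Real.exp (-(1 / (k : ℝ))) with hq
  have hq0 : (0:ℝ) < q := Real.exp_pos _
  have hq1 : q ≤ 1 := by
    rw [hq, Real.exp_le_one_iff, neg_nonpos]
    positivity
  have hp : 1 - q ≤ 1 / (k:ℝ) := by
    have := Real.add_one_le_exp (-(1 / (k:ℝ)))
    rw [hq]; linarith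
  -- bounds 0 ≤ y t i ≤ 1 for t ≤ k
  have hbound : ∀ t : ℕ, t ≤ k → ∀ i, 0 ≤ y t i ∧ y t i ≤ 1 := by
    intro t
    induction t with
    | zero => intro _ i; simp [h0]
    | succ n ih =>
      intro hn i
      have hn' : n < k := hn
      obtain ⟨h1, h2⟩ := ih (le_of_lt hn') i
      have hu := hupd ⟨n, hn'⟩ i
      simp only [Fin.val_mk] at hu
      rw [hu]
      split_ifs with h
      · constructor <;> nlinarith
      · exact ⟨h1, h2⟩
  -- the dominating point x
  set x : E → ℝ := fun i => ∑ t : Fin k, (1 / (k:ℝ)) * (if i ∈ B t then 1 else 0) with hxdef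
  have hx0 : ∀ i, 0 ≤ x i := by
    intro i
    apply Finset.sum_nonneg
    intro t _
    positivity
  have hyx : ∀ i, y k i ≤ x i := by
    intro i
    have htel : ∑ t : Fin k, (y ((t:ℕ) + 1) i - y (t:ℕ) i) = y k i - y 0 i := by
      rw [Fin.sum_univ_eq_sum_range (fun n => y (n + 1) i - y n i) k]
      exact Finset.sum_range_sub (fun n => y n i) k
    have hterm : ∀ t : Fin k,
        y ((t:ℕ) + 1) i - y (t:ℕ) i ≤ (1 / (k:ℝ)) * (if i ∈ B t then 1 else 0) := by
      intro t
      have hu := hupd t i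
      have hb := hbound t (le_of_lt t.isLt) i
      rw [hu]
      split_ifs with h
      · have : 1 + q * (y (t:ℕ) i - 1) - y (t:ℕ) i = (1 - q) * (1 - y (t:ℕ) i) := by ring
        rw [this]
        have h1 : (1 - q) * (1 - y (t:ℕ) i) ≤ (1 - q) * 1 := by
          apply mul_le_mul_of_nonneg_left _ (by linarith)
          linarith [hb.1]
        calc (1 - q) * (1 - y (t:ℕ) i) ≤ (1 - q) * 1 := h1
          _ ≤ 1 / (k:ℝ) * 1 := by linarith
      · simp
    have hsum := Finset.sum_le_sum (fun t (_ : t ∈ Finset.univ) => hterm t)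
    rw [htel] at hsum
    have : y 0 i = 0 := by rw [h0]
    rw [hxdef]
    simp only
    linarith [hsum]
  have hy0 : ∀ i, 0 ≤ y k i := fun i => (hbound k le_rfl i).1
  -- x is in the convex hull
  have hxmem : x ∈ convexHull ℝ V := by
    have hxeq : x = ∑ t : Fin k,
        (1 / (k:ℝ)) • (fun i => if i ∈ B t then (1:ℝ) else 0) := by
      funext i
      rw [hxdef]
      simp [Finset.sum_apply]
    rw [hxeq]
    apply (convex_convexHull ℝ V).sum_mem
    · intro t _; positivity
    · simp only [Finset.sum_const, Finset.card_univ, Fintype.card_fin, nsmul_eq_mul]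
      field_simp
    · intro t _
      exact subset_convexHull ℝ V ⟨B t, hB t, rfl⟩
  -- scaling a single coordinate by r ∈ [0,1] keeps us in the hull
  have hscale : ∀ (i : E) (r : ℝ), 0 ≤ r → r ≤ 1 → ∀ z ∈ convexHull ℝ V,
      (fun j => if j = i then r * z j else z j) ∈ convexHull ℝ V := by
    intro i r hr0 hr1 z hz
    set L : (E → ℝ) →ₗ[ℝ] (E → ℝ) :=
      { toFun := fun w j => if j = i then r * w j else w j
        map_add' := by
          intro a b; funext j; by_cases h : j = i <;> simp [h] <;> ring
        map_smul' := by
          intro c a; funext j; by_cases h : j = i <;> simp [h] <;> ring } with hL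
    have himg : L '' V ⊆ convexHull ℝ V := by
      rintro _ ⟨w, ⟨S, hS, rfl⟩, rfl⟩
      have h1 : (fun j => if j ∈ S then (1:ℝ) else 0) ∈ convexHull ℝ V :=
        subset_convexHull ℝ V ⟨S, hS, rfl⟩
      have h2 : (fun j => if j ∈ S.erase i then (1:ℝ) else 0) ∈ convexHull ℝ V := by
        refine subset_convexHull ℝ V ⟨S.erase i, hS.subset ?_, rfl⟩
        exact_mod_cast Finset.coe_subset.mpr (Finset.erase_subset i S)
      have hcomb := (convex_convexHull ℝ V) h1 h2 hr0 (by linarith : (0:ℝ) ≤ 1 - r)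
        (by ring : r + (1 - r) = 1)
      convert hcomb using 1
      funext j
      by_cases hji : j = i <;> by_cases hjS : j ∈ S <;>
        simp [hL, hji, hjS, Finset.mem_erase] <;> ring
    have hLz : L z ∈ L '' (convexHull ℝ V) := ⟨z, hz, rfl⟩
    rw [L.image_convexHull] at hLz
    have : convexHull ℝ (L '' V) ⊆ convexHull ℝ V :=
      convexHull_min himg (convex_convexHull ℝ V)
    exact this hLz
  -- main induction on coordinates
  have main : ∀ s : Finset E,
      (fun i => if i ∈ s then y k i else x i) ∈ convexHull ℝ V := by
    intro s
    induction s using Finset.induction_on with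
    | empty => simpa using hxmem
    | @insert i s hi ih =>
      set r : ℝ := if x i = 0 then 0 else y k i / x i with hr
      have hr0 : 0 ≤ r := by
        rw [hr]; split_ifs with h
        · exact le_rfl
        · exact div_nonneg (hy0 i) (hx0 i)
      have hr1 : r ≤ 1 := by
        rw [hr]; split_ifs with h
        · linarith
        · exact div_le_one_of_le₀ (hyx i) (hx0 i)
      have hrx : r * x i = y k i := by
        rw [hr]; split_ifs with h
        · have := hyx i
          have := hy0 i
          rw [h] at *
          linarith
        · field_simp
      have := hscale i r hr0 hr1 _ ih
      convert this using 1
      funext j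
      by_cases hji : j = i
      · subst hji
        simp [hi, hrx.symm]
      · by_cases hjs : j ∈ s <;> simp [hji, hjs]
  have := main Finset.univ
  convert this using 1
  funext i
  simp
end

section
/- Let a : ℕ → ℝ satisfy a(0) ≥ 0 and a(n+1) − a(n) ≥ (1 − e^(−ε))·((1 − 4ε)·e^(−(n+1)ε)·V − a(n+1)) for all n, where ε ∈ (0,1] and V ≥ 0. Then a(⌈1/ε⌉) ≥ (1/e − 2ε)·V. -/
lemma exp_neg_taylor {t : ℝ} (h0 : 0 ≤ t) (h1 : t ≤ 1) :
    |Real.exp (-t) - (1 - t + t^2/2)| ≤ 2/9 * t^3 := by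
  have h := Real.exp_bound (x := -t) (by rw [abs_neg, abs_of_nonneg h0]; exact h1) (n := 3) (by norm_num)
  have hs : ∑ m ∈ Finset.range 3, (-t) ^ m / (m.factorial : ℝ) = 1 - t + t^2/2 := by
    simp [Finset.sum_range_succ]
    ring
  rw [hs] at h
  rw [abs_neg, abs_of_nonneg h0] at h
  calc |Real.exp (-t) - (1 - t + t^2/2)| ≤ t^3 * ((3:ℕ).succ / ((3:ℕ).factorial * 3)) := h
    _ = 2/9 * t^3 := by norm_num [Nat.factorial]; ring

lemma te_mono {t s : ℝ} (h1 : 1 ≤ t) (hts : t ≤ s) :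
    s * Real.exp (-s) ≤ t * Real.exp (-t) := by
  have h := Real.add_one_le_exp (s - t)
  have hx : Real.exp (-t) = Real.exp (s - t) * Real.exp (-s) := by
    rw [← Real.exp_add]; ring_nf
  have hepos : (0:ℝ) < Real.exp (-s) := Real.exp_pos _
  have ht0 : (0:ℝ) ≤ t := le_trans zero_le_one h1
  have h2 : t * (s - t + 1) ≤ t * Real.exp (s - t) := mul_le_mul_of_nonneg_left h ht0
  have h3 : s ≤ t * (s - t + 1) := by nlinarith
  rw [hx]
  nlinarith [mul_le_mul_of_nonneg_right (le_trans h3 h2) hepos.le]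

lemma gsq_poly {ε : ℝ} (h0 : 0 < ε) (h4 : ε ≤ 1/4) :
    (1 - ε) ≤ (1 - ε/2 - ε^2)^2 * (1+ε) := by
  nlinarith [sq_nonneg ε, pow_nonneg h0.le 3, pow_nonneg h0.le 4, pow_nonneg h0.le 5]

lemma small_final {ε d : ℝ} (h0 : 0 < ε) (h4 : ε ≤ 1/4)
    (hdgt : (0.36787:ℝ) < d) (hdlt : d < 0.36788) :
    d - 2*ε ≤ ((1-4*ε) * (1-ε/2-ε^2) * (1+ε) * (1-2*ε+(14/9)*ε^2) * (1+ε/2-ε^2/2)) * d := by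
  have he2 : ε^2 ≤ 1/16 := by nlinarith
  have he3 : ε^3 ≤ 1/64 := by nlinarith [he2]
  have he6 : ε^6 ≤ 1/4096 := by nlinarith [he3, sq_nonneg ε, pow_nonneg h0.le 3]
  have hA5 : 1 - (1-4*ε) * (1-ε/2-ε^2) * (1+ε) * (1-2*ε+(14/9)*ε^2) * (1+ε/2-ε^2/2) ≤ 5 * ε := by
    have hexp : 1 - (1-4*ε) * (1-ε/2-ε^2) * (1+ε) * (1-2*ε+(14/9)*ε^2) * (1+ε/2-ε^2/2)
        = 5*ε - ((65/36)*ε^2 + (71/6)*ε^3 - (385/36)*ε^4 - (83/9)*ε^5 + (71/6)*ε^6 + (29/9)*ε^7 - (28/9)*ε^8) := by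
      ring
    rw [hexp]
    have hb1 : (385/36)*ε^4 ≤ (385/36)*(1/16)*ε^2 := by nlinarith [he2, sq_nonneg ε]
    have hb2 : (83/9)*ε^5 ≤ (83/9)*(1/64)*ε^2 := by nlinarith [he3, sq_nonneg ε]
    have hb3 : (28/9)*ε^8 ≤ (28/9)*(1/4096)*ε^2 := by nlinarith [he6, sq_nonneg ε]
    nlinarith [hb1, hb2, hb3, sq_nonneg ε, pow_nonneg h0.le 3, pow_nonneg h0.le 6, pow_nonneg h0.le 7]
  have hd0 : (0:ℝ) < d := by linarith
  rcases le_or_gt (1 - (1-4*ε) * (1-ε/2-ε^2) * (1+ε) * (1-2*ε+(14/9)*ε^2) * (1+ε/2-ε^2/2)) 0 with h' | h'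
  · have h1 : d ≤ ((1-4*ε) * (1-ε/2-ε^2) * (1+ε) * (1-2*ε+(14/9)*ε^2) * (1+ε/2-ε^2/2)) * d :=
      le_mul_of_one_le_left hd0.le (by linarith)
    linarith only [h1, h0]
  · have h6 : d * (1 - (1-4*ε) * (1-ε/2-ε^2) * (1+ε) * (1-2*ε+(14/9)*ε^2) * (1+ε/2-ε^2/2))
        ≤ (2/5) * (1 - (1-4*ε) * (1-ε/2-ε^2) * (1+ε) * (1-2*ε+(14/9)*ε^2) * (1+ε/2-ε^2/2)) :=
      mul_le_mul_of_nonneg_right (by linarith : d ≤ 2/5) h'.le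
    linarith only [h6, hA5]

lemma large_poly {ε d : ℝ} (h4 : 1/4 < ε) (h1 : ε ≤ 1)
    (hdgt : (0.36787:ℝ) < d) (hdlt : d < 0.36788) :
    (d - 2*ε) * (1 + ε + ε^2/3 + ε^3/27) ≤ 1 - 4*ε := by
  nlinarith [sq_nonneg (ε - 1/2), mul_nonneg (by linarith : (0:ℝ) ≤ 4*ε - 1) (by linarith : (0:ℝ) ≤ 1 - ε),
    pow_nonneg (by linarith : (0:ℝ) ≤ ε) 3, pow_nonneg (by linarith : (0:ℝ) ≤ ε) 4, sq_nonneg ε,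
    mul_nonneg (mul_nonneg (by linarith : (0:ℝ) ≤ 4*ε - 1) (by linarith : (0:ℝ) ≤ 1 - ε)) (by linarith : (0:ℝ) ≤ ε)]

set_option maxHeartbeats 1000000 in
theorem stmt_14 (ε V : ℝ) (hε : ε ∈ Set.Ioc (0:ℝ) 1) (hV : 0 ≤ V)
    (a : ℕ → ℝ) (h0 : 0 ≤ a 0)
    (hrec : ∀ n : ℕ, a (n + 1) - a n ≥
      (1 - Real.exp (-ε)) * ((1 - 4 * ε) * Real.exp (-((n : ℝ) + 1) * ε) * V - a (n + 1))) :
    a ⌈1 / ε⌉₊ ≥ (1 / Real.exp 1 - 2 * ε) * V := by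
  obtain ⟨hε0, hε1⟩ := hε
  set x := Real.exp (-ε) with hxdef
  have hx0 : 0 < x := Real.exp_pos _
  have hxlow : 1 - ε ≤ x := by nlinarith [Real.add_one_le_exp (-ε)]
  have hx1 : x < 1 := by
    rw [hxdef]
    exact Real.exp_lt_one_iff.mpr (by linarith)
  set d := Real.exp (-1 : ℝ) with hddef
  have hd0 : 0 < d := Real.exp_pos _
  have hde : d * Real.exp 1 = 1 := by
    rw [hddef, ← Real.exp_add]; norm_num
  have hdlt : d < 0.36788 := by
    nlinarith [Real.exp_one_gt_d9, hde, hd0]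
  have hdgt : (0.36787:ℝ) < d := by
    nlinarith [Real.exp_one_lt_d9, hde, hd0, Real.exp_pos 1]
  have hgoal : (1 / Real.exp 1 - 2 * ε) = d - 2*ε := by
    rw [hddef, Real.exp_neg, one_div]
  rw [hgoal]
  set c := (1 - 4*ε) * V with hcdef
  -- rearranged recurrence
  have hrec' : ∀ n : ℕ, a n + (1-x) * c * x^(n+1) ≤ (2-x) * a (n+1) := by
    intro n
    have h := hrec n
    have hpow : Real.exp (-((n:ℝ)+1)*ε) = x^(n+1) := by
      rw [hxdef, ← Real.exp_nat_mul]
      congr 1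
      push_cast
      ring
    rw [hpow] at h
    rw [hcdef]
    linarith only [h, sq_nonneg x]
  -- ceiling facts
  set N := ⌈1/ε⌉₊ with hNdef
  have hN1 : (1:ℝ)/ε ≤ (N:ℝ) := Nat.le_ceil _
  have hN2 : (N:ℝ) < 1/ε + 1 := Nat.ceil_lt_add_one (by positivity)
  set m := (N:ℝ) with hmdef
  have hm0 : 0 ≤ m := Nat.cast_nonneg _
  clear_value m
  clear_value x d c N
  have ht1 : 1 ≤ m * ε := by
    have h := mul_le_mul_of_nonneg_right hN1 hε0.le
    rwa [one_div, inv_mul_cancel₀ (ne_of_gt hε0)] at h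
  have ht2 : m * ε ≤ 1 + ε := by
    have h := mul_le_mul_of_nonneg_right hN2.le hε0.le
    calc m * ε ≤ (1/ε + 1) * ε := h
      _ = 1 + ε := by field_simp
  rcases le_or_gt ε (1/4) with hsm | hlg
  · -- small ε case
    have hc : 0 ≤ c := by
      rw [hcdef]; exact mul_nonneg (by linarith) hV
    -- main induction : a n ≥ T n
    have hT : ∀ n : ℕ, (1-x) * c * x^(n+1) * ((n:ℝ) + (1-x)^2 * (n:ℝ) * ((n:ℝ)+1)/2) ≤ a n := by
      intro n
      induction n with
      | zero => simpa using h0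
      | succ n ih =>
        have hr := hrec' n
        have hu : 0 ≤ (1-x) * c * x^(n+1) := by
          apply mul_nonneg (mul_nonneg (by linarith) hc)
          positivity
        have h2x : (0:ℝ) < 2 - x := by linarith
        have key : (2-x) * ((1-x) * c * x^(n+1+1) * (((n:ℝ)+1) + (1-x)^2 * ((n:ℝ)+1) * (((n:ℝ)+1)+1)/2))
            ≤ (1-x) * c * x^(n+1) * ((n:ℝ) + (1-x)^2 * (n:ℝ) * ((n:ℝ)+1)/2) + (1-x) * c * x^(n+1) := by
          have hnn : (0:ℝ) ≤ ((n:ℝ)+1) * ((n:ℝ)+2) * (1-x)^4 / 2 := by positivity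
          have hid : (1-x) * c * x^(n+1) * ((n:ℝ) + (1-x)^2 * (n:ℝ) * ((n:ℝ)+1)/2) + (1-x) * c * x^(n+1)
              - (2-x) * ((1-x) * c * x^(n+1+1) * (((n:ℝ)+1) + (1-x)^2 * ((n:ℝ)+1) * (((n:ℝ)+1)+1)/2))
              = ((1-x) * c * x^(n+1)) * (((n:ℝ)+1) * ((n:ℝ)+2) * (1-x)^4 / 2) := by
            ring
          linarith only [hid, mul_nonneg hu hnn]
        have hfin : (2-x) * ((1-x) * c * x^(n+1+1) * (((n:ℝ)+1) + (1-x)^2 * ((n:ℝ)+1) * (((n:ℝ)+1)+1)/2))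
            ≤ (2-x) * a (n+1) := by linarith only [key, ih, hr]
        have hres := le_of_mul_le_mul_left hfin h2x
        push_cast
        linarith only [hres]
    -- Taylor bounds
    have htay := exp_neg_taylor hε0.le hε1
    have hxup : x ≤ 1 - ε + ε^2/2 + 2/9*ε^3 := by
      have h := (abs_le.mp htay).2
      rw [hxdef] at *
      linarith only [h]
    set g : ℝ := 1 - ε/2 - ε^2 with hgdef
    clear_value g
    have hg0 : 0 < g := by rw [hgdef]; nlinarith [sq_nonneg ε]
    have hF1 : ε * g ≤ 1 - x := by
      rw [hgdef]
      nlinarith [hxup, pow_nonneg hε0.le 3]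
    have htay2 := exp_neg_taylor (t := 2*ε) (by linarith) (by linarith)
    set q : ℝ := 1 - 2*ε + (14/9)*ε^2 with hqdef
    clear_value q
    have hq0 : 0 < q := by rw [hqdef]; nlinarith [sq_nonneg ε]
    have hF3 : q ≤ x * x := by
      have hx2 : x * x = Real.exp (-(2*ε)) := by
        rw [hxdef, ← Real.exp_add]; congr 1; ring
      have h := (abs_le.mp htay2).1
      rw [hqdef, hx2]
      nlinarith [h, pow_nonneg hε0.le 3]
    have hxN : x^N = Real.exp (-(m*ε)) := by
      rw [hxdef, ← Real.exp_nat_mul]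
      congr 1
      rw [hmdef]
      ring
    have hdx : Real.exp (-(1+ε)) = d * x := by
      rw [hddef, hxdef, ← Real.exp_add]; congr 1; ring
    have hF2 : (1+ε) * (d * x) ≤ m * x^N * ε := by
      have h := te_mono ht1 ht2
      rw [hdx] at h
      rw [hxN]
      linarith only [h]
    have hF4 : 1 + ε ≤ ε * (m+1) := by nlinarith [ht1]
    have hxNpos : 0 < x^N := pow_pos hx0 _
    have hA1 : g * (1+ε) * (d*x) ≤ (1-x) * (m * x^N) := by
      have h1 : (ε*g) * ((1+ε)*(d*x)) ≤ (1-x) * (m * x^N * ε) := by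
        apply mul_le_mul hF1 hF2 (by positivity) (by linarith)
      have h2 : ε * (g * (1+ε) * (d*x)) ≤ ε * ((1-x) * (m * x^N)) := by
        calc ε * (g * (1+ε) * (d*x)) = (ε*g) * ((1+ε)*(d*x)) := by ring
          _ ≤ (1-x) * (m * x^N * ε) := h1
          _ = ε * ((1-x) * (m * x^N)) := by ring
      exact le_of_mul_le_mul_left h2 hε0
    set b : ℝ := 1 + ε/2 - ε^2/2 with hbdef
    clear_value b
    have hb0 : 0 < b := by rw [hbdef]; nlinarith [sq_nonneg ε]
    have hA2 : b ≤ 1 + (1-x)^2 * (m+1)/2 := by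
      have h1 : (ε*g)^2 ≤ (1-x)^2 := by
        apply sq_le_sq' _ hF1
        nlinarith [mul_pos hε0 hg0]
      have h2 : (ε*g)^2 * (m+1) ≤ (1-x)^2 * (m+1) :=
        mul_le_mul_of_nonneg_right h1 (by linarith)
      have h3 : ε * (g^2 * (1+ε)) ≤ (ε*g)^2 * (m+1) := by
        calc ε * (g^2 * (1+ε)) = (ε*g^2) * (1+ε) := by ring
          _ ≤ (ε*g^2) * (ε*(m+1)) := mul_le_mul_of_nonneg_left hF4 (by positivity)
          _ = (ε*g)^2 * (m+1) := by ring
      have h4 : (1 - ε) ≤ g^2 * (1+ε) := by rw [hgdef]; exact gsq_poly hε0 hsm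
      have h5 := mul_le_mul_of_nonneg_left h4 hε0.le
      rw [hbdef]
      linarith only [h2, h3, h5]
    -- combine
    have hTN := hT N
    have hTre : (1-x) * c * x^(N+1) * (m + (1-x)^2 * m * (m+1)/2)
        = c * ((1-x) * (m * x^N)) * x * (1 + (1-x)^2 * (m+1)/2) := by
      rw [hmdef, pow_succ]
      ring
    have hprod0 : 0 ≤ (1-x) * (m * x^N) := by
      apply mul_nonneg (by linarith)
      positivity
    have hstep1 : c * (g * (1+ε) * (d*x)) * x * b ≤ c * ((1-x) * (m * x^N)) * x * (1 + (1-x)^2 * (m+1)/2) := by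
      have e1 : c * (g * (1+ε) * (d*x)) * x ≤ c * ((1-x) * (m * x^N)) * x := by
        apply mul_le_mul_of_nonneg_right _ hx0.le
        exact mul_le_mul_of_nonneg_left hA1 hc
      apply mul_le_mul e1 hA2 hb0.le
      exact mul_nonneg (mul_nonneg hc hprod0) hx0.le
    have hstep2 : c * (g * (1+ε) * d * q * b) ≤ c * (g * (1+ε) * (d*x)) * x * b := by
      have e2 : c * (g * (1+ε) * d) * q ≤ c * (g * (1+ε) * d) * (x*x) := by
        apply mul_le_mul_of_nonneg_left hF3
        apply mul_nonneg hc
        positivity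
      have e3 : c * (g * (1+ε) * d) * q * b ≤ c * (g * (1+ε) * d) * (x*x) * b :=
        mul_le_mul_of_nonneg_right e2 hb0.le
      calc c * (g * (1+ε) * d * q * b) = c * (g * (1+ε) * d) * q * b := by ring
        _ ≤ c * (g * (1+ε) * d) * (x*x) * b := e3
        _ = c * (g * (1+ε) * (d*x)) * x * b := by ring
    have hTN' : (1-x) * c * x^(N+1) * (m + (1-x)^2 * m * (m+1)/2) ≤ a N := by
      have h := hT N
      rw [hmdef]
      linarith only [h]
    have hAN : c * (g * (1+ε) * d * q * b) ≤ a N := by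
      calc c * (g * (1+ε) * d * q * b) ≤ c * (g * (1+ε) * (d*x)) * x * b := hstep2
        _ ≤ c * ((1-x) * (m * x^N)) * x * (1 + (1-x)^2 * (m+1)/2) := hstep1
        _ = (1-x) * c * x^(N+1) * (m + (1-x)^2 * m * (m+1)/2) := hTre.symm
        _ ≤ a N := hTN'
    -- final polynomial inequality
    have hAd := small_final hε0 hsm hdgt hdlt
    have hfinal : (d - 2*ε) * V ≤ c * (g * (1+ε) * d * q * b) := by
      rw [hcdef, hgdef, hqdef, hbdef]
      calc (d - 2*ε) * V ≤ (((1-4*ε) * (1-ε/2-ε^2) * (1+ε) * (1-2*ε+(14/9)*ε^2) * (1+ε/2-ε^2/2)) * d) * V :=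
            mul_le_mul_of_nonneg_right hAd hV
        _ = (1-4*ε)*V * ((1-ε/2-ε^2) * (1+ε) * d * (1-2*ε+(14/9)*ε^2) * (1+ε/2-ε^2/2)) := by ring
    exact le_trans hfinal hAN
  · -- large ε case
    have hc : c ≤ 0 := by
      rw [hcdef]
      exact mul_nonpos_of_nonpos_of_nonneg (by linarith) hV
    have hlow : ∀ n : ℕ, c * x ≤ a n := by
      intro n
      induction n with
      | zero => nlinarith [mul_nonpos_of_nonpos_of_nonneg hc hx0.le]
      | succ n ih =>
        have hr := hrec' n
        have hxp : x^(n+1) ≤ x := by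
          calc x^(n+1) ≤ x^1 := pow_le_pow_of_le_one hx0.le hx1.le (by omega)
            _ = x := pow_one x
        have hcx : c * x ≤ c * x^(n+1) := by
          nlinarith [mul_nonneg (neg_nonneg.mpr hc) (by linarith : (0:ℝ) ≤ x - x^(n+1))]
        have h2x : (0:ℝ) < 2 - x := by linarith
        have hmul : (2-x) * (c*x) ≤ (2-x) * a (n+1) := by
          have e1 : (1-x)*(c*x) ≤ (1-x) * (c * x^(n+1)) :=
            mul_le_mul_of_nonneg_left hcx (by linarith)
          nlinarith [e1, hr, ih]
        exact le_of_mul_le_mul_left hmul h2x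
    have hP : (0:ℝ) < 1 + ε + ε^2/3 + ε^3/27 := by positivity
    have hcube : (1 + ε/3)^3 ≤ Real.exp ε := by
      have h1 : 1 + ε/3 ≤ Real.exp (ε/3) := by linarith [Real.add_one_le_exp (ε/3)]
      have h2 : (0:ℝ) ≤ 1 + ε/3 := by linarith
      calc (1 + ε/3)^3 ≤ (Real.exp (ε/3))^3 := by
            apply pow_le_pow_left₀ h2 h1
        _ = Real.exp ε := by
            rw [← Real.exp_nat_mul]
            congr 1
            push_cast
            ring
    have hxe : x * Real.exp ε = 1 := by
      rw [hxdef, ← Real.exp_add]; norm_num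
    have hxle : x * (1 + ε + ε^2/3 + ε^3/27) ≤ 1 := by
      have h := mul_le_mul_of_nonneg_left hcube hx0.le
      rw [hxe] at h
      nlinarith [h]
    have hkey : (d - 2*ε) ≤ (1-4*ε) * x := by
      have hpoly := large_poly hlg hε1 hdgt hdlt
      have h14 : 1 - 4*ε ≤ 0 := by linarith
      have h2 : (1-4*ε) ≤ (1-4*ε) * x * (1 + ε + ε^2/3 + ε^3/27) := by
        nlinarith [mul_nonneg (neg_nonneg.mpr h14) (by linarith [hxle] : (0:ℝ) ≤ 1 - x * (1 + ε + ε^2/3 + ε^3/27))]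
      have h3 : (d - 2*ε) * (1 + ε + ε^2/3 + ε^3/27) ≤ ((1-4*ε) * x) * (1 + ε + ε^2/3 + ε^3/27) := by
        linarith only [hpoly, h2]
      exact le_of_mul_le_mul_right h3 hP
    have hfin : (d - 2*ε) * V ≤ c * x := by
      rw [hcdef]
      calc (d - 2*ε) * V ≤ ((1-4*ε) * x) * V := mul_le_mul_of_nonneg_right hkey hV
        _ = (1-4*ε)*V*x := by ring
    linarith [hlow N, hfin]
end

section
/- For all ε ∈ (0,1], the quantity 1/e − [(1 − e^(−ε))·(1 − 4ε)·e^(−ε(1/ε + 1))·(e^(ε(1/ε+1))·(1/(2 − e^(−ε)))^(1/ε) − e^ε)] / (e^(−ε) + e^ε − 2) is at most (5/e)·ε, and hence at most 2ε. -/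
open Real

lemma aux_sum4 (x : ℝ) :
    (∑ m ∈ Finset.range 4, x ^ m / (m.factorial : ℝ)) = 1 + x + x^2/2 + x^3/6 := by
  simp [Finset.sum_range_succ, Nat.factorial]
  try ring

lemma aux_cubic_le_exp {u : ℝ} (hu : 0 ≤ u) :
    1 + u + u^2/2 + u^3/6 ≤ Real.exp u := by
  have h := Real.sum_le_exp_of_nonneg hu 4
  rw [aux_sum4] at h
  exact h

lemma aux_exp_quartic {x : ℝ} (hx : |x| ≤ 1) :
    |Real.exp x - (1 + x + x^2/2 + x^3/6)| ≤ |x|^4 * (5/96) := by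
  have h := Real.exp_bound hx (n := 4) (by norm_num)
  rw [aux_sum4] at h
  have h2 : ((Nat.succ 4 : ℝ) / ((Nat.factorial 4 : ℝ) * 4)) = 5/96 := by
    norm_num [Nat.factorial]
  calc |Real.exp x - (1 + x + x^2/2 + x^3/6)|
      ≤ |x|^4 * ((Nat.succ 4 : ℝ) / ((Nat.factorial 4:ℝ) * 4)) := by exact_mod_cast h
    _ = |x|^4 * (5/96) := by rw [h2]

lemma aux_exp_upper {x : ℝ} (h0 : 0 ≤ x) (h1 : x ≤ 1) :
    Real.exp x ≤ 1 + x + x^2/2 + x^3/6 + x^4 * (5/96) := by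
  have h := aux_exp_quartic (x := x) (by rw [abs_of_nonneg h0]; exact h1)
  rw [abs_of_nonneg h0] at h
  have := (abs_le.mp h).2
  linarith

lemma aux_exp_neg_upper {x : ℝ} (h0 : 0 ≤ x) (h1 : x ≤ 1) :
    Real.exp (-x) ≤ 1 - x + x^2/2 - x^3/6 + x^4 * (5/96) := by
  have h := aux_exp_quartic (x := -x) (by rw [abs_neg, abs_of_nonneg h0]; exact h1)
  rw [abs_neg, abs_of_nonneg h0] at h
  have := (abs_le.mp h).2
  nlinarith [this]

lemma aux_exp_neg_lower {x : ℝ} (h0 : 0 ≤ x) (h1 : x ≤ 1) :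
    1 - x + x^2/2 - x^3/6 - x^4 * (5/96) ≤ Real.exp (-x) := by
  have h := aux_exp_quartic (x := -x) (by rw [abs_neg, abs_of_nonneg h0]; exact h1)
  rw [abs_neg, abs_of_nonneg h0] at h
  have := (abs_le.mp h).1
  nlinarith [this]

set_option maxHeartbeats 2000000 in
theorem stmt_15 (ε : ℝ) (hε : ε ∈ Set.Ioc (0:ℝ) 1) :
    1 / Real.exp 1 -
      ((1 - Real.exp (-ε)) * (1 - 4 * ε) * Real.exp (-ε * (1 / ε + 1)) *
          (Real.exp (ε * (1 / ε + 1)) * (1 / (2 - Real.exp (-ε))) ^ (1 / ε) - Real.exp ε)) /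
        (Real.exp (-ε) + Real.exp ε - 2) ≤ (5 / Real.exp 1) * ε ∧
    (5 / Real.exp 1) * ε ≤ 2 * ε := by
  obtain ⟨hε0, hε1⟩ := hε
  have hεne : ε ≠ 0 := ne_of_gt hε0
  constructor
  · -- main inequality
    have hy1 : Real.exp (-ε) < 1 := by
      have : Real.exp (-ε) < Real.exp 0 := Real.exp_lt_exp.mpr (by linarith)
      simpa using this
    have hb : (0:ℝ) < 2 - Real.exp (-ε) := by
      have := Real.exp_pos (-ε); linarith
    have hx1 : 1 < Real.exp ε := by
      have : Real.exp 0 < Real.exp ε := Real.exp_lt_exp.mpr hε0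
      simpa using this
    have hE : (0:ℝ) < Real.exp 1 := Real.exp_pos 1
    have h1e : Real.exp (-1) * Real.exp 1 = 1 := by
      rw [← Real.exp_add]; norm_num
    have hxy : Real.exp (-ε) * Real.exp ε = 1 := by
      rw [← Real.exp_add]; norm_num
    set A : ℝ := (1 / (2 - Real.exp (-ε))) ^ (1 / ε) with hAdef
    have hAexp : A = Real.exp (-(Real.log (2 - Real.exp (-ε))) * (1/ε)) := by
      rw [hAdef, Real.rpow_def_of_pos (by positivity), one_div (2 - Real.exp (-ε)),
        Real.log_inv]
    have hx_up : Real.exp ε ≤ 1 + ε + ε^2/2 + ε^3/6 + ε^4 * (5/96) :=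
      aux_exp_upper hε0.le hε1
    have hy_up : Real.exp (-ε) ≤ 1 - ε + ε^2/2 - ε^3/6 + ε^4 * (5/96) :=
      aux_exp_neg_upper hε0.le hε1
    have hy_lo : 1 - ε + ε^2/2 - ε^3/6 - ε^4 * (5/96) ≤ Real.exp (-ε) :=
      aux_exp_neg_lower hε0.le hε1
    -- power facts
    have hp43 : ε^4 ≤ ε^3 := pow_le_pow_of_le_one hε0.le hε1 (by norm_num)
    have hp53 : ε^5 ≤ ε^3 := pow_le_pow_of_le_one hε0.le hε1 (by norm_num)
    have hp63 : ε^6 ≤ ε^3 := pow_le_pow_of_le_one hε0.le hε1 (by norm_num)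
    have hp83 : ε^8 ≤ ε^3 := pow_le_pow_of_le_one hε0.le hε1 (by norm_num)
    have hp64 : ε^6 ≤ ε^4 := pow_le_pow_of_le_one hε0.le hε1 (by norm_num)
    have hp87 : ε^8 ≤ ε^7 := pow_le_pow_of_le_one hε0.le hε1 (by norm_num)
    have hp7 : (0:ℝ) ≤ ε^7 := pow_nonneg hε0.le 7
    have hp9 : (0:ℝ) ≤ ε^9 := pow_nonneg hε0.le 9
    -- (I) : 2 - exp(-ε) ≤ exp (ε - ε² + ε³)
    have hI : 2 - Real.exp (-ε) ≤ Real.exp (ε - ε^2 + ε^3) := by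
      have hu0 : (0:ℝ) ≤ ε - ε^2 + ε^3 := by nlinarith
      have h := aux_cubic_le_exp hu0
      nlinarith [h, hy_lo, hp64, hp87, hp9]
    -- (III) : exp (ε - ε²) ≤ 2 - exp (-ε)
    have hIII : Real.exp (ε - ε^2) ≤ 2 - Real.exp (-ε) := by
      have hv0 : (0:ℝ) ≤ ε - ε^2 := by nlinarith
      have hv1 : ε - ε^2 ≤ 1 := by nlinarith
      have h := aux_exp_upper hv0 hv1
      nlinarith [h, hy_up, hp43, hp53, hp63, hp83, hp7]
    -- bounds on A
    have hA_lo : Real.exp (ε - ε^2) * Real.exp (-1) ≤ A := by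
      rw [hAexp, ← Real.exp_add]
      apply Real.exp_le_exp.mpr
      have hlog : Real.log (2 - Real.exp (-ε)) ≤ ε - ε^2 + ε^3 :=
        (Real.log_le_iff_le_exp hb).mpr hI
      have h2 : -(ε - ε^2 + ε^3) * (1/ε) ≤ -(Real.log (2 - Real.exp (-ε))) * (1/ε) :=
        mul_le_mul_of_nonneg_right (by linarith) (by positivity)
      have h3 : -(ε - ε^2 + ε^3) * (1/ε) = ε - ε^2 + -1 := by
        field_simp; ring
      linarith [h2, h3.symm.le]
    have hA_up : A ≤ Real.exp ε * Real.exp (-1) := by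
      rw [hAexp, ← Real.exp_add]
      apply Real.exp_le_exp.mpr
      have hlog : ε - ε^2 ≤ Real.log (2 - Real.exp (-ε)) :=
        (Real.le_log_iff_exp_le hb).mpr hIII
      have h2 : -(Real.log (2 - Real.exp (-ε))) * (1/ε) ≤ -(ε - ε^2) * (1/ε) :=
        mul_le_mul_of_nonneg_right (by linarith) (by positivity)
      have h3 : -(ε - ε^2) * (1/ε) = ε + -1 := by field_simp; ring
      linarith [h2, h3.le]
    have hA_e : Real.exp (-1) ≤ A := by
      rw [hAexp]
      apply Real.exp_le_exp.mpr
      have hee : 2 - Real.exp (-ε) ≤ Real.exp ε := by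
        have h4 := Real.add_one_le_exp ε
        have h5 := Real.add_one_le_exp (-ε)
        linarith
      have hlog : Real.log (2 - Real.exp (-ε)) ≤ ε :=
        (Real.log_le_iff_le_exp hb).mpr hee
      have h2 : -ε * (1/ε) ≤ -(Real.log (2 - Real.exp (-ε))) * (1/ε) :=
        mul_le_mul_of_nonneg_right (by linarith) (by positivity)
      have h3 : -ε * (1/ε) = -1 := by field_simp
      linarith [h2, h3.symm.le]
    -- rewrite the fraction
    have e1 : Real.exp (-ε * (1/ε + 1)) = Real.exp (-1) * Real.exp (-ε) := by
      rw [← Real.exp_add]; congr 1; field_simp; ring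
    have e2 : Real.exp (ε * (1/ε + 1)) = Real.exp 1 * Real.exp ε := by
      rw [← Real.exp_add]; congr 1; field_simp
    have hnum : (1 - Real.exp (-ε)) * (1 - 4 * ε) * Real.exp (-ε * (1 / ε + 1)) *
          (Real.exp (ε * (1 / ε + 1)) * A - Real.exp ε)
        = (1 - Real.exp (-ε)) * ((1 - 4*ε) * (A - Real.exp (-1))) := by
      rw [e1, e2]
      linear_combination ((1 - Real.exp (-ε)) * (1 - 4*ε) * A *
          (Real.exp (-1) * Real.exp 1) - (1 - Real.exp (-ε)) * (1 - 4*ε) * Real.exp (-1)) * hxy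
        + ((1 - Real.exp (-ε)) * (1 - 4*ε) * A) * h1e
    have hden : Real.exp (-ε) + Real.exp ε - 2 = (1 - Real.exp (-ε)) * (Real.exp ε - 1) := by
      linear_combination hxy
    rw [hnum, hden,
      mul_div_mul_left ((1 - 4*ε) * (A - Real.exp (-1))) (Real.exp ε - 1) (by linarith)]
    -- key inequality
    have key : (1 - 5*ε) * (Real.exp ε - 1) ≤
        (1 - 4*ε) * (A - Real.exp (-1)) * Real.exp 1 := by
      rcases le_or_gt ε (1/5) with hc1 | hc1
      · -- small case
        have hv0 : (0:ℝ) ≤ ε - ε^2 := by nlinarith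
        have hvlo := aux_cubic_le_exp hv0
        have h1e' : Real.exp (ε - ε^2) * (Real.exp (-1) * Real.exp 1) = Real.exp (ε - ε^2) := by
          rw [h1e, mul_one]
        have hstep : Real.exp (ε - ε^2) - 1 ≤ (A - Real.exp (-1)) * Real.exp 1 := by
          nlinarith [mul_le_mul_of_nonneg_right hA_lo hE.le, h1e', h1e]
        have h4 : (1 - 4*ε) * (Real.exp (ε - ε^2) - 1) ≤
            (1 - 4*ε) * ((A - Real.exp (-1)) * Real.exp 1) :=
          mul_le_mul_of_nonneg_left hstep (by linarith)
        have h65 : ε^6 ≤ (1/5) * ε^5 := by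
          have : ε^6 = ε^5 * ε := by ring
          nlinarith [pow_nonneg hε0.le 5]
        have hpoly : (1 - 5*ε) * (Real.exp ε - 1) ≤
            (1 - 4*ε) * (Real.exp (ε - ε^2) - 1) := by
          nlinarith [hx_up, hvlo, hε0, hc1, h65, hp7,
            mul_pos (mul_pos hε0 hε0) hε0]
        calc (1 - 5*ε) * (Real.exp ε - 1) ≤ (1 - 4*ε) * (Real.exp (ε - ε^2) - 1) := hpoly
          _ ≤ (1 - 4*ε) * ((A - Real.exp (-1)) * Real.exp 1) := h4
          _ = (1 - 4*ε) * (A - Real.exp (-1)) * Real.exp 1 := by ring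
      · rcases le_or_gt ε (1/4) with hc2 | hc2
        · have hL : (1 - 5*ε) * (Real.exp ε - 1) ≤ 0 :=
            mul_nonpos_of_nonpos_of_nonneg (by linarith) (by linarith)
          have hR : 0 ≤ (1 - 4*ε) * (A - Real.exp (-1)) * Real.exp 1 := by
            apply mul_nonneg _ hE.le
            exact mul_nonneg (by linarith) (by linarith [hA_e])
          linarith
        · -- ε > 1/4
          have h8 : (1 - 4*ε) * (Real.exp ε * Real.exp (-1) - Real.exp (-1)) ≤
              (1 - 4*ε) * (A - Real.exp (-1)) := by
            apply mul_le_mul_of_nonpos_left _ (by linarith)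
            linarith [hA_up]
          have h9 : (1 - 4*ε) * (Real.exp ε * Real.exp (-1) - Real.exp (-1)) * Real.exp 1
              = (1 - 4*ε) * (Real.exp ε - 1) := by
            linear_combination ((1 - 4*ε) * (Real.exp ε - 1)) * h1e
          have h10 : (1 - 5*ε) * (Real.exp ε - 1) ≤ (1 - 4*ε) * (Real.exp ε - 1) := by
            nlinarith [mul_pos hε0 (by linarith : (0:ℝ) < Real.exp ε - 1)]
          have h11 : (1 - 4*ε) * (Real.exp ε * Real.exp (-1) - Real.exp (-1)) * Real.exp 1 ≤
              (1 - 4*ε) * (A - Real.exp (-1)) * Real.exp 1 :=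
            mul_le_mul_of_nonneg_right h8 hE.le
          linarith
    -- finish
    have h6 : (1 - 5*ε)/Real.exp 1 ≤ (1 - 4*ε) * (A - Real.exp (-1)) / (Real.exp ε - 1) := by
      rw [div_le_div_iff₀ hE (by linarith)]
      linarith [key]
    have h7 : (1 - 5*ε)/Real.exp 1 = 1/Real.exp 1 - 5/Real.exp 1 * ε := by ring
    linarith
  · -- 5/e ≤ 2
    have h := Real.exp_one_gt_d9
    have hE : (0:ℝ) < Real.exp 1 := Real.exp_pos 1
    have h2 : 5 / Real.exp 1 ≤ 2 := by
      rw [div_le_iff₀ hE]; nlinarith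
    nlinarith [hε0]
end
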